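/- Let m ≥ 2, n = 2m, and let a, b : Fin m → Fin n be injective maps with disjoint ranges covering Fin n (write i_l = a(l), j_l = b(l)). Fix k ≠ p and let r be any strict total order on Fin n of the form α_{kp} i_k j_k i_p j_p β_{kp}, i.e. r places first the m−2 elements {j_1,…,j_m}∖{j_k, j_p} in some arbitrary order, then i_k, j_k, i_p, j_p in this order, then the m−2 elements {i_1,…,i_m}∖{i_k, i_p} in some arbitrary order. Then the incidence vector χ_r satisfies f(χ_r) = 1, where f(x) = 2·∑_{l} x(i_l, j_l) − ∑_{l} ∑_{q} x(i_l, j_q). -/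
import Mathlib


open scoped BigOperators

/-- A point of the linear ordering polytope relaxation `B_n`. -/
def IsBn {n : ℕ} (x : Fin n → Fin n → ℝ) : Prop :=
  (∀ i, x i i = 0) ∧
  (∀ i j : Fin n, i ≠ j → 0 ≤ x i j ∧ x i j ≤ 1) ∧
  (∀ i j : Fin n, i ≠ j → x i j + x j i = 1) ∧
  (∀ i j k : Fin n, i ≠ j → i ≠ k → j ≠ k →
    0 ≤ x i j + x j k - x i k ∧ x i j + x j k - x i k ≤ 1)

/-- A strict total order on `Fin n`: irreflexive, transitive and total. -/
def IsSTO {n : ℕ} (r : Fin n → Fin n → Prop) : Prop :=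
  (∀ i, ¬ r i i) ∧ (∀ i j k, r i j → r j k → r i k) ∧
  (∀ i j : Fin n, i ≠ j → r i j ∨ r j i)

open Classical in
/-- The incidence vector `χ_r` of a relation `r`. -/
noncomputable def chi {n : ℕ} (r : Fin n → Fin n → Prop) : Fin n → Fin n → ℝ :=
  fun i j => if r i j then 1 else 0

/-- The fence function `f(x) = 2·∑ l, x(a l, b l) − ∑ l, ∑ q, x(a l, b q)`. -/
noncomputable def fence {m n : ℕ} (a b : Fin m → Fin n)
    (x : Fin n → Fin n → ℝ) : ℝ :=
  2 * ∑ l, x (a l) (b l) - ∑ l, ∑ q, x (a l) (b q)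

theorem fence_tight_type2 {m : ℕ} (hm : 2 ≤ m)
    (a b : Fin m → Fin (2 * m))
    (ha : Function.Injective a) (hb : Function.Injective b)
    (hab : ∀ l q, a l ≠ b q)
    (hcov : ∀ u : Fin (2 * m), (∃ l, u = a l) ∨ (∃ l, u = b l))
    (k p : Fin m) (hkp : k ≠ p)
    (s : Fin (2 * m) ≃ Fin (2 * m))
    -- the first `m - 2` positions carry `{j_1, …, j_m} \ {j_k, j_p}` in some order
    (hα : ∀ u : Fin (2 * m), (u : ℕ) < m - 2 → ∃ l, l ≠ k ∧ l ≠ p ∧ s u = b l)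
    -- then `i_k`, `j_k`, `i_p`, `j_p` in this order
    (hik : ∀ u : Fin (2 * m), (u : ℕ) = m - 2 → s u = a k)
    (hjk : ∀ u : Fin (2 * m), (u : ℕ) = m - 1 → s u = b k)
    (hip : ∀ u : Fin (2 * m), (u : ℕ) = m → s u = a p)
    (hjp : ∀ u : Fin (2 * m), (u : ℕ) = m + 1 → s u = b p)
    -- the remaining positions carry `{i_1, …, i_m} \ {i_k, i_p}` in some order
    (hβ : ∀ u : Fin (2 * m), m + 1 < (u : ℕ) → ∃ l, l ≠ k ∧ l ≠ p ∧ s u = a l)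
    (r : Fin (2 * m) → Fin (2 * m) → Prop)
    (hr : ∀ u v : Fin (2 * m), r (s u) (s v) ↔ u < v) :
    fence a b (chi r) = 1 := by
  classical
  have hm2 : m - 2 < 2 * m := by omega
  have hm1 : m - 1 < 2 * m := by omega
  have hmm : m < 2 * m := by omega
  have hm3 : m + 1 < 2 * m := by omega
  set P : Fin (2 * m) → ℕ := fun u => ((s.symm u : Fin (2 * m)) : ℕ) with hPdef
  have hrP : ∀ x y, r x y ↔ P x < P y := by
    intro x y
    have h := hr (s.symm x) (s.symm y)
    rw [Equiv.apply_symm_apply, Equiv.apply_symm_apply] at h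
    exact h
  have hPak : P (a k) = m - 2 := by
    have h : s ⟨m - 2, hm2⟩ = a k := hik _ rfl
    have h2 : s.symm (a k) = ⟨m - 2, hm2⟩ := s.symm_apply_eq.mpr h.symm
    simp [hPdef, h2]
  have hPbk : P (b k) = m - 1 := by
    have h : s ⟨m - 1, hm1⟩ = b k := hjk _ rfl
    have h2 : s.symm (b k) = ⟨m - 1, hm1⟩ := s.symm_apply_eq.mpr h.symm
    simp [hPdef, h2]
  have hPap : P (a p) = m := by
    have h : s ⟨m, hmm⟩ = a p := hip _ rfl
    have h2 : s.symm (a p) = ⟨m, hmm⟩ := s.symm_apply_eq.mpr h.symm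
    simp [hPdef, h2]
  have hPbp : P (b p) = m + 1 := by
    have h : s ⟨m + 1, hm3⟩ = b p := hjp _ rfl
    have h2 : s.symm (b p) = ⟨m + 1, hm3⟩ := s.symm_apply_eq.mpr h.symm
    simp [hPdef, h2]
  have hPal : ∀ l, l ≠ k → l ≠ p → m + 1 < P (a l) := by
    intro l hlk hlp
    by_contra hcon
    push_neg at hcon
    set u := s.symm (a l) with hu
    have hsu : s u = a l := s.apply_symm_apply _
    have hval : (u : ℕ) ≤ m + 1 := hcon
    rcases Nat.lt_or_ge (u : ℕ) (m - 2) with h1 | h1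
    · obtain ⟨l', _, _, hl'⟩ := hα u h1
      exact hab l l' (hsu.symm.trans hl')
    · rcases (by omega : (u:ℕ) = m - 2 ∨ (u:ℕ) = m - 1 ∨ (u:ℕ) = m ∨ (u:ℕ) = m + 1) with h2 | h2 | h2 | h2
      · exact hlk (ha (hsu.symm.trans (hik u h2)))
      · exact hab l k (hsu.symm.trans (hjk u h2))
      · exact hlp (ha (hsu.symm.trans (hip u h2)))
      · exact hab l p (hsu.symm.trans (hjp u h2))
  have hPbq : ∀ q, q ≠ k → q ≠ p → P (b q) < m - 2 := by
    intro q hqk hqp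
    by_contra hcon
    push_neg at hcon
    set u := s.symm (b q) with hu
    have hsu : s u = b q := s.apply_symm_apply _
    have hval : m - 2 ≤ (u : ℕ) := hcon
    rcases Nat.lt_or_ge (m + 1) (u : ℕ) with h1 | h1
    · obtain ⟨l', _, _, hl'⟩ := hβ u h1
      exact hab l' q (hl'.symm.trans hsu)
    · rcases (by omega : (u:ℕ) = m - 2 ∨ (u:ℕ) = m - 1 ∨ (u:ℕ) = m ∨ (u:ℕ) = m + 1) with h2 | h2 | h2 | h2
      · exact hab k q ((hik u h2).symm.trans hsu)
      · exact hqk (hb (hsu.symm.trans (hjk u h2)))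
      · exact hab p q ((hip u h2).symm.trans hsu)
      · exact hqp (hb (hsu.symm.trans (hjp u h2)))
  have chi_eq : ∀ x y, chi r x y = if P x < P y then 1 else 0 := by
    intro x y
    simp only [chi]
    exact if_congr (hrP x y) rfl rfl
  have key : ∀ l q, chi r (a l) (b q) =
      (if l = k ∧ q = k then (1:ℝ) else 0) + (if l = k ∧ q = p then 1 else 0) +
        (if l = p ∧ q = p then 1 else 0) := by
    intro l q
    rw [chi_eq]
    by_cases hlk : l = k
    · by_cases hqk : q = k
      · simp only [hlk, hqk, hPak, hPbk]
        simp [hkp, show m - 2 < m - 1 from by omega]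
      · by_cases hqp : q = p
        · simp only [hlk, hqp, hPak, hPbp]
          simp [hkp, Ne.symm hkp, show m - 2 < m + 1 from by omega]
        · have h := hPbq q hqk hqp
          rw [hlk, hPak, if_neg (by omega)]
          simp [hqk, hqp]
    · by_cases hlp : l = p
      · by_cases hqk : q = k
        · simp only [hlp, hqk, hPap, hPbk]
          simp [hkp, Ne.symm hkp, show ¬ m < m - 1 from by omega]
        · by_cases hqp : q = p
          · simp only [hlp, hqp, hPap, hPbp]
            simp [Ne.symm hkp, show m < m + 1 from by omega]
          · have h := hPbq q hqk hqp
            rw [hlp, hPap, if_neg (by omega)]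
            simp [hqk, hqp]
      · have hA := hPal l hlk hlp
        have hB : P (b q) ≤ m + 1 := by
          by_cases hqk : q = k
          · rw [hqk, hPbk]; omega
          · by_cases hqp : q = p
            · rw [hqp, hPbp]
            · have := hPbq q hqk hqp; omega
        rw [if_neg (by omega)]
        simp [hlk, hlp]
  have sum_ite_pair : ∀ (c : Prop) (_ : Decidable c) (j : Fin m),
      ∑ q : Fin m, (if c ∧ q = j then (1:ℝ) else 0) = if c then 1 else 0 := by
    intro c hc j
    by_cases h : c
    · simp [h, Finset.sum_ite_eq']
    · simp [h]
  have hS1 : ∑ l, chi r (a l) (b l) = 2 := by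
    have e : ∀ l : Fin m, chi r (a l) (b l) =
        (if l = k then (1:ℝ) else 0) + (if l = p then 1 else 0) := by
      intro l
      rw [key l l]
      have hmid : (if l = k ∧ l = p then (1:ℝ) else 0) = 0 := by
        rw [if_neg]
        rintro ⟨rfl, h⟩
        exact hkp h
      simp [hmid]
    rw [Finset.sum_congr rfl (fun l _ => e l), Finset.sum_add_distrib]
    simp [Finset.sum_ite_eq']
    norm_num
  have hS2 : ∑ l, ∑ q, chi r (a l) (b q) = 3 := by
    have inner : ∀ l : Fin m, ∑ q, chi r (a l) (b q) =
        (if l = k then (1:ℝ) else 0) + (if l = k then 1 else 0) + (if l = p then 1 else 0) := by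
      intro l
      simp only [key]
      rw [Finset.sum_add_distrib, Finset.sum_add_distrib,
        sum_ite_pair _ _ k, sum_ite_pair _ _ p, sum_ite_pair _ _ p]
    rw [Finset.sum_congr rfl (fun l _ => inner l), Finset.sum_add_distrib,
      Finset.sum_add_distrib]
    simp [Finset.sum_ite_eq']
    norm_num
  unfold fence
  rw [hS1, hS2]
  norm_num
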